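/- Let Γ be a finite nilpotent group and Σ a subgroup with ΣδΣ = Σδ⁻¹Σ for some δ ∈ Γ. Then there exists an element μ in a Sylow 2-subgroup of Γ such that μΣμ⁻¹ = δΣδ⁻¹. Consequently |Σ : Σ ∩ δΣδ⁻¹| is a power of 2. -/

import Mathlib

/-- The double coset ΣδΣ = {a * δ * b : a, b ∈ Σ}. -/
def doubleCoset {Γ : Type*} [Group Γ] (S : Subgroup Γ) (δ : Γ) : Set Γ :=
  {x | ∃ a ∈ S, ∃ b ∈ S, x = a * δ * b}

/-!
Write `δ⁻¹ = a δ b` with `a, b ∈ Σ`. Then `x = δ b` conjugates `Σ` as `δ` does, and `x² ∈ Σ`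
because `x⁻¹ = (b⁻¹ a) x`. If `m` is the odd part of the order of `x`, then `μ = x ^ m` is a
2-element with `x⁻¹ μ = (x²) ^ ((m - 1) / 2) ∈ Σ`, so `μ` also conjugates `Σ` to `δ Σ δ⁻¹`, and
it lies in the (normal, hence unique) Sylow 2-subgroup. In a nilpotent group `μ` centralises
every element of odd prime-power order, so every odd Sylow subgroup of `Σ` lies in `μ Σ μ⁻¹`;
hence no odd prime divides `|Σ : Σ ∩ μ Σ μ⁻¹|`.
-/

open Subgroup

section

variable {G : Type*} [Group G]

theorem map_conj_eq_of_inv_mul_mem (S : Subgroup G) {g h : G} (hgh : g⁻¹ * h ∈ S) :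
    S.map (MulAut.conj g).toMonoidHom = S.map (MulAut.conj h).toMonoidHom := by
  ext x
  simp only [mem_map, MulEquiv.coe_toMonoidHom, MulAut.conj_apply]
  constructor
  · rintro ⟨s, hs, rfl⟩
    exact ⟨(g⁻¹ * h)⁻¹ * s * (g⁻¹ * h), S.mul_mem (S.mul_mem (S.inv_mem hgh) hs) hgh, by group⟩
  · rintro ⟨s, hs, rfl⟩
    exact ⟨(g⁻¹ * h) * s * (g⁻¹ * h)⁻¹, S.mul_mem (S.mul_mem hgh hs) (S.inv_mem hgh), by group⟩

theorem mem_map_conj_of_commute {S : Subgroup G} {g s : G} (hs : s ∈ S) (hgs : Commute g s) :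
    s ∈ S.map (MulAut.conj g).toMonoidHom :=
  ⟨s, hs, by simp [hgs.eq]⟩

theorem exists_inv_mul_mem_sq_mem {S : Subgroup G} {δ : G} (h : δ⁻¹ ∈ doubleCoset S δ) :
    ∃ x, δ⁻¹ * x ∈ S ∧ x ^ 2 ∈ S := by
  obtain ⟨a, ha, b, hb, hab⟩ := h
  refine ⟨δ * b, by simpa using hb, ?_⟩
  have hinv : (δ * b)⁻¹ = b⁻¹ * a * (δ * b) := by
    rw [mul_inv_rev, hab]
    group
  have hsq : ((δ * b) ^ 2)⁻¹ = b⁻¹ * a := by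
    rw [sq, mul_inv_rev]
    nth_rewrite 1 [hinv]
    group
  exact S.inv_mem_iff.mp (hsq ▸ S.mul_mem (S.inv_mem hb) ha)

theorem exists_isPGroup_two_zpowers_inv_mul_mem [Finite G] {S : Subgroup G} {x : G}
    (hx : x ^ 2 ∈ S) : ∃ μ, IsPGroup 2 (zpowers μ) ∧ x⁻¹ * μ ∈ S := by
  set n := orderOf x
  have hn : n ≠ 0 := (orderOf_pos x).ne'
  set m := n / 2 ^ n.factorization 2
  have hm : Odd m :=
    Nat.odd_iff.mpr (Nat.two_dvd_ne_zero.mp (Nat.not_dvd_ordCompl Nat.prime_two hn))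
  obtain ⟨k, hk⟩ := hm
  refine ⟨x ^ m, IsPGroup.of_card (n := n.factorization 2) ?_, ?_⟩
  · rw [Nat.card_zpowers, orderOf_pow_orderOf_div hn (Nat.ordProj_dvd n 2)]
  · have : x⁻¹ * x ^ m = (x ^ 2) ^ k := by
      rw [hk, ← pow_mul, pow_succ', inv_mul_cancel_left]
    rw [this]
    exact S.pow_mem hx k

theorem IsPGroup.le_of_normal_sylow [Finite G] {p : ℕ} [Fact p.Prime] {H : Subgroup G}
    (hH : IsPGroup p H) (P : Sylow p G) [P.Normal] : H ≤ P := by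
  obtain ⟨Q, hQ⟩ := hH.exists_le_sylow
  have := Sylow.unique_of_normal P ‹_›
  rwa [Subsingleton.elim Q P] at hQ

theorem commute_of_isPGroup_of_ne [Finite G] [Group.IsNilpotent G] {p q : ℕ} [Fact p.Prime]
    [Fact q.Prime] (hpq : p ≠ q) {H K : Subgroup G} (hH : IsPGroup p H) (hK : IsPGroup q K)
    {g h : G} (hg : g ∈ H) (hh : h ∈ K) : Commute g h := by
  obtain ⟨P, hP⟩ := hH.exists_le_sylow
  obtain ⟨Q, hQ⟩ := hK.exists_le_sylow
  exact commute_of_normal_of_disjoint P Q inferInstance inferInstance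
    (IsPGroup.disjoint_of_ne p q hpq _ _ P.isPGroup' Q.isPGroup') g h (hP hg) (hQ hh)

theorem Subgroup.exists_index_eq_pow_of_sylow_le [Finite G] {H : Subgroup G} {p : ℕ}
    (h : ∀ q, q.Prime → q ≠ p → ∃ Q : Sylow q G, (Q : Subgroup G) ≤ H) :
    ∃ n, H.index = p ^ n := by
  refine ⟨_, Nat.eq_prime_pow_of_unique_prime_dvd H.index_ne_zero_of_finite fun {q} hq hdvd => ?_⟩
  by_contra hne
  obtain ⟨Q, hQ⟩ := h q hq hne
  have := Fact.mk hq
  exact Q.not_dvd_index (hdvd.trans (index_dvd_of_le hQ))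

end

/-- Let Γ be a finite nilpotent group and Σ a subgroup with ΣδΣ = Σδ⁻¹Σ for some δ ∈ Γ.
Then there exists an element μ in a Sylow 2-subgroup of Γ such that μΣμ⁻¹ = δΣδ⁻¹.
Consequently |Σ : Σ ∩ δΣδ⁻¹| is a power of 2. -/
theorem stmt1 {Γ : Type*} [Group Γ] [Finite Γ] [Group.IsNilpotent Γ]
    (S : Subgroup Γ) (δ : Γ) (P : Sylow 2 Γ)
    (hdc : doubleCoset S δ = doubleCoset S δ⁻¹) :
    (∃ μ ∈ P, Subgroup.map (MulAut.conj μ).toMonoidHom S =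
        Subgroup.map (MulAut.conj δ).toMonoidHom S) ∧
      ∃ n : ℕ, (Subgroup.map (MulAut.conj δ).toMonoidHom S).relIndex S = 2 ^ n := by
  have hδ : δ⁻¹ ∈ doubleCoset S δ := hdc ▸ ⟨1, S.one_mem, 1, S.one_mem, by group⟩
  obtain ⟨x, hδx, hx⟩ := exists_inv_mul_mem_sq_mem hδ
  obtain ⟨μ, hμ, hxμ⟩ := exists_isPGroup_two_zpowers_inv_mul_mem hx
  have hμP : μ ∈ P := hμ.le_of_normal_sylow P (mem_zpowers μ)
  have hconj : S.map (MulAut.conj μ).toMonoidHom = S.map (MulAut.conj δ).toMonoidHom :=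
    (map_conj_eq_of_inv_mul_mem S hxμ).symm.trans (map_conj_eq_of_inv_mul_mem S hδx).symm
  refine ⟨⟨μ, hμP, hconj⟩, ?_⟩
  rw [← hconj]
  refine exists_index_eq_pow_of_sylow_le fun q hq hq2 => ?_
  have := Fact.mk hq
  obtain ⟨Q⟩ : Nonempty (Sylow q S) := inferInstance
  refine ⟨Q, fun s hs => mem_map_conj_of_commute s.2 ?_⟩
  exact commute_of_isPGroup_of_ne hq2.symm P.isPGroup' (Q.isPGroup'.map S.subtype) hμP
    (mem_map_of_mem _ hs)
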